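/- Let V, E be real reflexive Banach spaces, Λ ⊆ E closed convex, b : V × E → ℝ bilinear bounded, A : V → V*, γ : V → X linear bounded, J : X → ℝ locally Lipschitz, f ∈ V*, and h : V → ℝ convex with the map u ↦ A(u)+γ*∂J(γu) h-relaxed monotone and h satisfying h(0)=0 and limsup_{t→0⁺} h(tv)/t ≥ 0, and A satisfying limsup_{t→0⁺}⟨A(tw+(1-t)v), w-v⟩ ≤ ⟨A(v), w-v⟩. Then the solution set S of the mixed variational-hemivariational inequality (the set of (u,λ) ∈ V × Λ with ⟨A(u), v-u⟩ + b(v-u,λ) + J⁰(γu; γv-γu) ≥ ⟨f, v-u⟩ for all v ∈ V and b(u, ρ-λ) ≤ 0 for all ρ ∈ Λ) is a convex subset of V × E. -/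

import Mathlib

/-!
Solutions are exactly the pairs `(u, λ)` with `λ ∈ Λ` satisfying the Minty-type inequality
`⟨f, v - u⟩ + h(v - u) ≤ ⟨A v, v - u⟩ + b(v, λ) - b(u, ρ) - J⁰(γv; γu - γv)` for all `v` and all
`ρ ∈ Λ`. Adding the variational inequality to relaxed monotonicity gives it, once elements of
`∂J` realising `J⁰` in a given direction are produced by Hahn–Banach (`J⁰(x; ·)` is sublinear).
Conversely, testing at `v = t • w + (1 - t) • u`, dividing by `t` and letting `t → 0⁺` recovers
the variational inequality, by the hemicontinuity of `A`, the condition on `h(t • v) / t`, and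
upper semicontinuity of `J⁰` in the base point; relaxed monotonicity between the points of the
segment and `w` bounds `A (t • w + (1 - t) • u) (w - u)` from above, which the limsup hypothesis
on `A` needs.
The Minty inequality is convex in `(u, λ)`: `h` and `J⁰(x; ·)` are convex and the rest is affine.
-/

open Filter Topology

/-- Clarke generalized directional derivative of `J` at `u` in direction `v`. -/
noncomputable def clarkeDeriv {V : Type*} [NormedAddCommGroup V] [NormedSpace ℝ V]
    (J : V → ℝ) (u v : V) : ℝ :=
  Filter.limsup (fun p : V × ℝ => (J (p.1 + p.2 • v) - J p.1) / p.2)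
    ((𝓝 u) ×ˢ (𝓝[>] (0 : ℝ)))

/-- Clarke generalized gradient of `J` at `u`. -/
def clarkeGrad {V : Type*} [NormedAddCommGroup V] [NormedSpace ℝ V]
    (J : V → ℝ) (u : V) : Set (V →L[ℝ] ℝ) :=
  {ξ | ∀ w, ξ w ≤ clarkeDeriv J u w}

section Sublinear

variable {E : Type*} [AddCommGroup E] [Module ℝ E]

theorem exists_linearMap_le_sublinear_eq (N : E → ℝ)
    (N_hom : ∀ c : ℝ, 0 < c → ∀ x, N (c • x) = c * N x) (N_add : ∀ x y, N (x + y) ≤ N x + N y)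
    (d : E) : ∃ g : E →ₗ[ℝ] ℝ, (∀ x, g x ≤ N x) ∧ g d = N d := by
  have N_zero : N 0 = 0 := by
    have := N_hom 2 two_pos 0
    rw [smul_zero] at this
    linarith
  have N_neg : ∀ x, -N (-x) ≤ N x := fun x => by
    have := N_add x (-x)
    rw [add_neg_cancel, N_zero] at this
    linarith
  let f : E →ₗ.[ℝ] ℝ := LinearPMap.mkSpanSingleton' d (N d) fun c hc => by
    rcases smul_eq_zero.1 hc with rfl | rfl
    · exact zero_smul ℝ _
    · rw [N_zero, smul_zero]
  obtain ⟨g, hgf, hgN⟩ := exists_extension_of_le_sublinear f N N_hom N_add <| by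
    rintro ⟨x, hx⟩
    obtain ⟨c, rfl⟩ := Submodule.mem_span_singleton.1 hx
    rw [LinearPMap.mkSpanSingleton'_apply, RingHom.id_apply, smul_eq_mul]
    rcases lt_trichotomy c 0 with hc | rfl | hc
    · have := N_hom (-c) (neg_pos.2 hc) (-d)
      rw [neg_smul_neg] at this
      nlinarith [N_neg d]
    · simp [N_zero]
    · exact (N_hom c hc d).ge
  refine ⟨g, hgN, ?_⟩
  exact (hgf ⟨d, Submodule.mem_span_singleton_self d⟩).trans
    (LinearPMap.mkSpanSingleton'_apply_self _ _ _ _)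

end Sublinear

section Clarke

variable {X : Type*} [NormedAddCommGroup X] [NormedSpace ℝ X] {J : X → ℝ}

noncomputable def clarkeQuotient (J : X → ℝ) (d : X) (p : X × ℝ) : ℝ :=
  (J (p.1 + p.2 • d) - J p.1) / p.2

theorem clarkeDeriv_eq_limsup (J : X → ℝ) (x d : X) :
    clarkeDeriv J x d = limsup (clarkeQuotient J d) (𝓝 x ×ˢ 𝓝[>] 0) :=
  rfl

theorem clarkeDeriv_zero (J : X → ℝ) (x : X) : clarkeDeriv J x 0 = 0 := by
  simp [clarkeDeriv]

theorem tendsto_fst_add_snd_smul_nhds_prod_nhdsGT (x d : X) :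
    Tendsto (fun p : X × ℝ => p.1 + p.2 • d) (𝓝 x ×ˢ 𝓝[>] 0) (𝓝 x) := by
  simpa using (tendsto_fst (f := 𝓝 x) (g := 𝓝[>] (0 : ℝ))).add
    ((tendsto_snd.mono_right nhdsWithin_le_nhds).smul_const d)

theorem LocallyLipschitz.exists_eventually_abs_clarkeQuotient_le (hJ : LocallyLipschitz J)
    (x : X) : ∃ K : ℝ, ∀ d, ∀ᶠ p in 𝓝 x ×ˢ 𝓝[>] 0, |clarkeQuotient J d p| ≤ K * ‖d‖ := by
  obtain ⟨K, s, hs, hK⟩ := hJ x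
  refine ⟨K, fun d => ?_⟩
  filter_upwards [tendsto_fst.eventually hs,
    (tendsto_fst_add_snd_smul_nhds_prod_nhdsGT x d).eventually hs,
    tendsto_snd.eventually self_mem_nhdsWithin] with p hp hpd (hpos : 0 < p.2)
  rw [clarkeQuotient, abs_div, abs_of_pos hpos, div_le_iff₀ hpos]
  calc |J (p.1 + p.2 • d) - J p.1| ≤ K * dist (p.1 + p.2 • d) p.1 := hK.dist_le_mul _ hpd _ hp
    _ = K * ‖d‖ * p.2 := by
      rw [dist_eq_norm, add_sub_cancel_left, norm_smul, Real.norm_of_nonneg hpos.le]; ring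

theorem LocallyLipschitz.isBoundedUnder_abs_clarkeQuotient (hJ : LocallyLipschitz J) (x d : X) :
    (𝓝 x ×ˢ 𝓝[>] 0).IsBoundedUnder (· ≤ ·) fun p => |clarkeQuotient J d p| :=
  have ⟨_, hK⟩ := hJ.exists_eventually_abs_clarkeQuotient_le x
  isBoundedUnder_of_eventually_le (hK d)

theorem LocallyLipschitz.isBoundedUnder_le_clarkeQuotient (hJ : LocallyLipschitz J) (x d : X) :
    (𝓝 x ×ˢ 𝓝[>] 0).IsBoundedUnder (· ≤ ·) (clarkeQuotient J d) :=
  (isBoundedUnder_le_abs.1 (hJ.isBoundedUnder_abs_clarkeQuotient x d)).1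

theorem LocallyLipschitz.isCoboundedUnder_le_clarkeQuotient (hJ : LocallyLipschitz J) (x d : X) :
    (𝓝 x ×ˢ 𝓝[>] 0).IsCoboundedUnder (· ≤ ·) (clarkeQuotient J d) :=
  (isBoundedUnder_le_abs.1 (hJ.isBoundedUnder_abs_clarkeQuotient x d)).2.isCoboundedUnder_le

theorem LocallyLipschitz.exists_clarkeDeriv_le (hJ : LocallyLipschitz J) (x : X) :
    ∃ K : ℝ, ∀ d, clarkeDeriv J x d ≤ K * ‖d‖ :=
  have ⟨K, hK⟩ := hJ.exists_eventually_abs_clarkeQuotient_le x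
  ⟨K, fun d => limsup_le_of_le (hJ.isCoboundedUnder_le_clarkeQuotient x d)
    ((hK d).mono fun _ hp => (abs_le.1 hp).2)⟩

theorem LocallyLipschitz.clarkeDeriv_add_le (hJ : LocallyLipschitz J) (x a c : X) :
    clarkeDeriv J x (a + c) ≤ clarkeDeriv J x a + clarkeDeriv J x c := by
  set φ : X × ℝ → X × ℝ := fun p => (p.1 + p.2 • c, p.2)
  have hφ : Tendsto φ (𝓝 x ×ˢ 𝓝[>] 0) (𝓝 x ×ˢ 𝓝[>] 0) :=
    (tendsto_fst_add_snd_smul_nhds_prod_nhdsGT x c).prodMk tendsto_snd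
  have hsplit : clarkeQuotient J (a + c) = clarkeQuotient J a ∘ φ + clarkeQuotient J c := by
    ext ⟨z, t⟩
    simp only [clarkeQuotient, φ, Function.comp_apply, Pi.add_apply, smul_add]
    rw [← add_div, add_assoc, add_comm (t • a)]
    ring_nf
  have hφa := isBoundedUnder_le_abs.1 (hφ.isBoundedUnder_comp
    (hJ.isBoundedUnder_abs_clarkeQuotient x a))
  rw [clarkeDeriv_eq_limsup, hsplit]
  calc limsup (clarkeQuotient J a ∘ φ + clarkeQuotient J c) (𝓝 x ×ˢ 𝓝[>] 0)
      ≤ limsup (clarkeQuotient J a ∘ φ) (𝓝 x ×ˢ 𝓝[>] 0) + clarkeDeriv J x c :=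
        limsup_add_le hφa.2 hφa.1 (hJ.isCoboundedUnder_le_clarkeQuotient x c)
          (hJ.isBoundedUnder_le_clarkeQuotient x c)
    _ ≤ clarkeDeriv J x a + clarkeDeriv J x c := by
      gcongr
      exact hφ.limsup_comp_le_limsup hφa.2.isCoboundedUnder_le
        (hJ.isBoundedUnder_le_clarkeQuotient x a)

theorem LocallyLipschitz.clarkeDeriv_smul_le (hJ : LocallyLipschitz J) (x d : X) {c : ℝ}
    (hc : 0 < c) : clarkeDeriv J x (c • d) ≤ c * clarkeDeriv J x d := by
  set ψ : X × ℝ → X × ℝ := fun p => (p.1, c * p.2)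
  have hψ : Tendsto ψ (𝓝 x ×ˢ 𝓝[>] 0) (𝓝 x ×ˢ 𝓝[>] 0) :=
    tendsto_fst.prodMk <| (tendsto_iff_comap.2 (comap_mulLeft_nhdsGT_zero hc).ge).comp tendsto_snd
  have hscale : clarkeQuotient J (c • d) = (c * ·) ∘ (clarkeQuotient J d ∘ ψ) := by
    ext ⟨z, t⟩
    rcases eq_or_ne t 0 with rfl | ht
    · simp [clarkeQuotient, ψ]
    · simp only [clarkeQuotient, ψ, Function.comp_apply, smul_smul, mul_comm t c]
      field_simp
  have hψd := isBoundedUnder_le_abs.1 (hψ.isBoundedUnder_comp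
    (hJ.isBoundedUnder_abs_clarkeQuotient x d))
  rw [clarkeDeriv_eq_limsup, hscale,
    ← (monotone_mul_left_of_nonneg hc.le).map_limsup_of_continuousAt (clarkeQuotient J d ∘ ψ)
      (continuous_const_mul c).continuousAt hψd.1 hψd.2.isCoboundedUnder_le]
  gcongr
  exact hψ.limsup_comp_le_limsup hψd.2.isCoboundedUnder_le (hJ.isBoundedUnder_le_clarkeQuotient x d)

theorem LocallyLipschitz.clarkeDeriv_smul (hJ : LocallyLipschitz J) (x d : X) {c : ℝ}
    (hc : 0 ≤ c) : clarkeDeriv J x (c • d) = c * clarkeDeriv J x d := by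
  rcases hc.eq_or_lt with rfl | hc
  · simp [clarkeDeriv_zero]
  refine (hJ.clarkeDeriv_smul_le x d hc).antisymm ?_
  calc c * clarkeDeriv J x d = c * clarkeDeriv J x (c⁻¹ • c • d) := by
        rw [inv_smul_smul₀ hc.ne']
    _ ≤ c * (c⁻¹ * clarkeDeriv J x (c • d)) := by
        gcongr; exact hJ.clarkeDeriv_smul_le x _ (inv_pos.2 hc)
    _ = clarkeDeriv J x (c • d) := by field_simp

theorem LocallyLipschitz.neg_clarkeDeriv_neg_le (hJ : LocallyLipschitz J) (x d : X) :
    -clarkeDeriv J x (-d) ≤ clarkeDeriv J x d := by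
  have := hJ.clarkeDeriv_add_le x d (-d)
  rw [add_neg_cancel, clarkeDeriv_zero] at this
  linarith

theorem LocallyLipschitz.convexOn_clarkeDeriv (hJ : LocallyLipschitz J) (x : X) :
    ConvexOn ℝ Set.univ (clarkeDeriv J x) := by
  refine ⟨convex_univ, fun a _ b _ s t hs ht _ => ?_⟩
  calc clarkeDeriv J x (s • a + t • b) ≤ clarkeDeriv J x (s • a) + clarkeDeriv J x (t • b) :=
        hJ.clarkeDeriv_add_le x _ _
    _ = s • clarkeDeriv J x a + t • clarkeDeriv J x b := by
        rw [hJ.clarkeDeriv_smul x a hs, hJ.clarkeDeriv_smul x b ht, smul_eq_mul, smul_eq_mul]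

theorem LocallyLipschitz.eventually_clarkeDeriv_lt (hJ : LocallyLipschitz J) {x d : X} {r : ℝ}
    (hr : clarkeDeriv J x d < r) : ∀ᶠ y in 𝓝 x, clarkeDeriv J y d < r := by
  obtain ⟨r', hr', hr'r⟩ := exists_between hr
  have hev := eventually_lt_of_limsup_lt hr' (hJ.isBoundedUnder_le_clarkeQuotient x d)
  obtain ⟨P, hP, Q, hQ, hPQ⟩ := eventually_prod_iff.1 hev
  filter_upwards [hP.eventually_nhds] with y hy
  refine (limsup_le_of_le (hJ.isCoboundedUnder_le_clarkeQuotient y d) ?_).trans_lt hr'r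
  exact (hy.prod_mk hQ).mono fun p hp => (hPQ hp.1 hp.2).le

theorem LocallyLipschitz.exists_mem_clarkeGrad_apply_eq (hJ : LocallyLipschitz J) (x d : X) :
    ∃ ξ ∈ clarkeGrad J x, ξ d = clarkeDeriv J x d := by
  obtain ⟨g, hg, hgd⟩ := exists_linearMap_le_sublinear_eq (clarkeDeriv J x)
    (fun c hc w => hJ.clarkeDeriv_smul x w hc.le) (hJ.clarkeDeriv_add_le x) d
  obtain ⟨K, hK⟩ := hJ.exists_clarkeDeriv_le x
  refine ⟨g.mkContinuous K fun w => ?_, hg, hgd⟩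
  rw [Real.norm_eq_abs, abs_le]
  constructor
  · have hneg := (hg (-w)).trans (hK (-w))
    rw [map_neg, norm_neg] at hneg
    linarith
  · linarith [hg w, hK w]

theorem LocallyLipschitz.clarkeGrad_nonempty (hJ : LocallyLipschitz J) (x : X) :
    (clarkeGrad J x).Nonempty :=
  have ⟨ξ, hξ, _⟩ := hJ.exists_mem_clarkeGrad_apply_eq x 0
  ⟨ξ, hξ⟩

end Clarke

theorem ConvexOn.neg_mul_le_apply_smul {V : Type*} [AddCommGroup V] [Module ℝ V] {h : V → ℝ}
    (hh : ConvexOn ℝ Set.univ h) (h0 : h 0 = 0) {s : ℝ} (hs0 : 0 ≤ s) (hs1 : s ≤ 1) (x : V) :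
    -(s * h (-x)) ≤ h (s • x) := by
  have hsym := hh.2 (Set.mem_univ (s • x)) (Set.mem_univ (-(s • x))) (by norm_num : (0 : ℝ) ≤ 1 / 2)
    (by norm_num : (0 : ℝ) ≤ 1 / 2) (by norm_num)
  have hseg := hh.2 (Set.mem_univ (-x)) (Set.mem_univ 0) hs0 (sub_nonneg.2 hs1) (add_sub_cancel s 1)
  rw [← smul_add, add_neg_cancel, smul_zero, h0, smul_eq_mul, smul_eq_mul] at hsym
  rw [smul_zero, add_zero, h0, smul_zero, add_zero, smul_neg, smul_eq_mul] at hseg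
  linarith

theorem tendsto_smul_add_one_sub_smul_nhdsGT {V : Type*} [NormedAddCommGroup V] [NormedSpace ℝ V]
    (u w : V) : Tendsto (fun t : ℝ => t • w + (1 - t) • u) (𝓝[>] 0) (𝓝 u) := by
  have hcont : Continuous fun t : ℝ => t • w + (1 - t) • u := by fun_prop
  simpa using (hcont.tendsto 0).mono_left nhdsWithin_le_nhds

section MixedInequality

variable {V E X : Type*} [NormedAddCommGroup V] [NormedSpace ℝ V] [AddCommGroup E] [Module ℝ E]
  [NormedAddCommGroup X] [NormedSpace ℝ X] {Λ : Set E} {b : V →ₗ[ℝ] E →ₗ[ℝ] ℝ}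
  {A : V → V →L[ℝ] ℝ} {γ : V →L[ℝ] X} {J : X → ℝ} {f : V →L[ℝ] ℝ} {h : V → ℝ}

/-- `h`-relaxed monotonicity of the multivalued map `u ↦ A u + γ* ∂J(γ u)`. -/
def IsRelaxedMonotone (h : V → ℝ) (A : V → V →L[ℝ] ℝ) (γ : V →L[ℝ] X) (J : X → ℝ) : Prop :=
  ∀ u v : V, ∀ ξu ∈ clarkeGrad J (γ u), ∀ ξv ∈ clarkeGrad J (γ v),
    h (u - v) ≤ A u (u - v) + ξu (γ (u - v)) - A v (u - v) - ξv (γ (u - v))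

def solutionSet (Λ : Set E) (b : V →ₗ[ℝ] E →ₗ[ℝ] ℝ) (A : V → V →L[ℝ] ℝ) (γ : V →L[ℝ] X)
    (J : X → ℝ) (f : V →L[ℝ] ℝ) : Set (V × E) :=
  {p | p.2 ∈ Λ ∧
    (∀ v : V, f (v - p.1) ≤
      A p.1 (v - p.1) + b (v - p.1) p.2 + clarkeDeriv J (γ p.1) (γ v - γ p.1)) ∧
    (∀ ρ ∈ Λ, b p.1 (ρ - p.2) ≤ 0)}

/-- Minty-type reformulation of `solutionSet`. The Clarke term is `-J⁰(γv; γu - γv)` rather than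
`J⁰(γv; γv - γu)`: it is the sharper bound and, being concave in `u`, makes the set convex. -/
def mintySet (Λ : Set E) (b : V →ₗ[ℝ] E →ₗ[ℝ] ℝ) (A : V → V →L[ℝ] ℝ) (γ : V →L[ℝ] X)
    (J : X → ℝ) (f : V →L[ℝ] ℝ) (h : V → ℝ) : Set (V × E) :=
  {p | p.2 ∈ Λ ∧ ∀ v : V, ∀ ρ ∈ Λ,
    f (v - p.1) + h (v - p.1) ≤
      A v (v - p.1) + b v p.2 - b p.1 ρ - clarkeDeriv J (γ v) (γ p.1 - γ v)}

theorem solutionSet_subset_mintySet (hJ : LocallyLipschitz J) (hmono : IsRelaxedMonotone h A γ J) :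
    solutionSet Λ b A γ J f ⊆ mintySet Λ b A γ J f h := by
  rintro ⟨u, l⟩ ⟨hl, hvar, hcompl⟩
  refine ⟨hl, fun v ρ hρ => ?_⟩
  obtain ⟨ξu, hξu, hξu_eq⟩ := hJ.exists_mem_clarkeGrad_apply_eq (γ u) (γ v - γ u)
  obtain ⟨ξv, hξv, hξv_eq⟩ := hJ.exists_mem_clarkeGrad_apply_eq (γ v) (γ u - γ v)
  have hm := hmono v u ξv hξv ξu hξu
  have hξv_eq' : ξv (γ v - γ u) = -clarkeDeriv J (γ v) (γ u - γ v) := by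
    rw [← neg_sub, map_neg, hξv_eq]
  have hb : b (v - u) l = b v l - b u l := by rw [map_sub, LinearMap.sub_apply]
  have hρl := hcompl ρ hρ
  rw [map_sub γ] at hm
  rw [map_sub] at hρl
  linarith [hvar v]

theorem IsRelaxedMonotone.exists_eventually_apply_segment_le (hmono : IsRelaxedMonotone h A γ J)
    (hJ : LocallyLipschitz J) (hh : ConvexOn ℝ Set.univ h) (h0 : h 0 = 0) (u w : V) :
    ∃ C, ∀ᶠ t in 𝓝[>] (0 : ℝ), A (t • w + (1 - t) • u) (w - u) ≤ C := by
  obtain ⟨ξw, hξw⟩ := hJ.clarkeGrad_nonempty (γ w)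
  have hnear : ∀ᶠ t in 𝓝[>] (0 : ℝ), clarkeDeriv J (γ (t • w + (1 - t) • u)) (γ (u - w)) <
      clarkeDeriv J (γ u) (γ (u - w)) + 1 :=
    ((γ.continuous.tendsto u).comp (tendsto_smul_add_one_sub_smul_nhdsGT u w)).eventually
      (hJ.eventually_clarkeDeriv_lt (lt_add_one _))
  refine ⟨h (w - u) + (clarkeDeriv J (γ u) (γ (u - w)) + 1) - A w (u - w) - ξw (γ (u - w)), ?_⟩
  filter_upwards [hnear, Ioo_mem_nhdsGT one_pos] with t hJt ⟨ht0, ht1⟩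
  set vt := t • w + (1 - t) • u
  obtain ⟨ξ, hξ⟩ := hJ.clarkeGrad_nonempty (γ vt)
  have hm := hmono vt w ξ hξ ξw hξw
  have hsub : vt - w = (1 - t) • (u - w) := by module
  have hlow := hh.neg_mul_le_apply_smul h0 (sub_nonneg.2 ht1.le) (by linarith) (u - w)
  rw [hsub] at hm
  rw [neg_sub] at hlow
  simp only [map_smul, smul_eq_mul] at hm
  rw [show A vt (u - w) = -A vt (w - u) by rw [← map_neg, neg_sub]] at hm
  have hscaled : (1 - t) * A vt (w - u) ≤
      (1 - t) * (h (w - u) + ξ (γ (u - w)) - A w (u - w) - ξw (γ (u - w))) := by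
    linarith
  linarith [le_of_mul_le_mul_left hscaled (sub_pos.2 ht1), hξ (γ (u - w))]

theorem apply_sub_add_div_le_of_mem_mintySet (hJ : LocallyLipschitz J) {u : V} {l : E}
    (hp : (u, l) ∈ mintySet Λ b A γ J f h) (w : V) {t : ℝ} (ht : 0 < t) :
    f (w - u) + h (t • (w - u)) / t ≤ A (t • w + (1 - t) • u) (w - u) + b (w - u) l +
      clarkeDeriv J (γ (t • w + (1 - t) • u)) (γ (w - u)) := by
  set vt := t • w + (1 - t) • u
  have hM := hp.2 vt l hp.1
  dsimp only at hM
  have hsub : vt - u = t • (w - u) := by module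
  have hγsub : γ u - γ vt = t • -γ (w - u) := by
    rw [← map_sub, ← map_neg, ← map_smul]; congr 1; module
  have hb : b vt l - b u l = t * b (w - u) l := by
    rw [← LinearMap.sub_apply, ← map_sub, hsub, map_smul, LinearMap.smul_apply, smul_eq_mul]
  rw [hsub, hγsub, hJ.clarkeDeriv_smul _ _ ht.le, map_smul, map_smul, smul_eq_mul,
    smul_eq_mul] at hM
  have hneg := mul_le_mul_of_nonneg_left (hJ.neg_clarkeDeriv_neg_le (γ vt) (γ (w - u))) ht.le
  have hquot : h (t • (w - u)) / t ≤ A vt (w - u) + b (w - u) l +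
      clarkeDeriv J (γ vt) (γ (w - u)) - f (w - u) := by
    rw [div_le_iff₀' ht]
    linarith
  linarith

theorem apply_sub_le_of_mem_mintySet (hJ : LocallyLipschitz J) (hh : ConvexOn ℝ Set.univ h)
    (h0 : h 0 = 0) (hhlim : ∀ v : V, 0 ≤ limsup (fun t : ℝ => h (t • v) / t) (𝓝[>] 0))
    (hA : ∀ w v : V, limsup (fun t : ℝ => A (t • w + (1 - t) • v) (w - v)) (𝓝[>] 0) ≤ A v (w - v))
    (hmono : IsRelaxedMonotone h A γ J) {u : V} {l : E} (hp : (u, l) ∈ mintySet Λ b A γ J f h)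
    (w : V) : f (w - u) ≤ A u (w - u) + b (w - u) l + clarkeDeriv J (γ u) (γ w - γ u) := by
  rw [← map_sub]
  have hpos : ∀ᶠ t in 𝓝[>] (0 : ℝ), 0 < t := self_mem_nhdsWithin
  -- Real `limsup`s are junk unless bounded on the relevant side: `hquot_ge` and `hC` make the
  -- hypotheses `hhlim` and `hA` usable.
  have hquot_ge : ∀ᶠ t in 𝓝[>] (0 : ℝ), -h (-(w - u)) ≤ h (t • (w - u)) / t := by
    filter_upwards [Ioo_mem_nhdsGT one_pos] with t ⟨ht0, ht1⟩
    rw [le_div_iff₀ ht0]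
    linarith [hh.neg_mul_le_apply_smul h0 ht0.le ht1.le (w - u)]
  obtain ⟨C, hC⟩ := hmono.exists_eventually_apply_segment_le hJ hh h0 u w
  refine le_of_forall_pos_lt_add fun ε hε => ?_
  have hquot : ∃ᶠ t in 𝓝[>] (0 : ℝ), -(ε / 3) < h (t • (w - u)) / t :=
    frequently_lt_of_lt_limsup (isBoundedUnder_of_eventually_ge hquot_ge).isCoboundedUnder_le
      ((neg_neg_of_pos (by positivity)).trans_le (hhlim (w - u)))
  have hAseg : ∀ᶠ t in 𝓝[>] (0 : ℝ), A (t • w + (1 - t) • u) (w - u) < A u (w - u) + ε / 3 :=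
    eventually_lt_of_limsup_lt ((hA w u).trans_lt (by linarith))
      (isBoundedUnder_of_eventually_le hC)
  have hclarke : ∀ᶠ t in 𝓝[>] (0 : ℝ), clarkeDeriv J (γ (t • w + (1 - t) • u)) (γ (w - u)) <
      clarkeDeriv J (γ u) (γ (w - u)) + ε / 3 :=
    ((γ.continuous.tendsto u).comp (tendsto_smul_add_one_sub_smul_nhdsGT u w)).eventually
      (hJ.eventually_clarkeDeriv_lt (by linarith))
  obtain ⟨t, hqt, hAt, hct, ht⟩ := (hquot.and_eventually (hAseg.and (hclarke.and hpos))).exists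
  linarith [apply_sub_add_div_le_of_mem_mintySet hJ hp w ht]

theorem mintySet_subset_solutionSet (hJ : LocallyLipschitz J) (hh : ConvexOn ℝ Set.univ h)
    (h0 : h 0 = 0) (hhlim : ∀ v : V, 0 ≤ limsup (fun t : ℝ => h (t • v) / t) (𝓝[>] 0))
    (hA : ∀ w v : V, limsup (fun t : ℝ => A (t • w + (1 - t) • v) (w - v)) (𝓝[>] 0) ≤ A v (w - v))
    (hmono : IsRelaxedMonotone h A γ J) :
    mintySet Λ b A γ J f h ⊆ solutionSet Λ b A γ J f := by
  rintro ⟨u, l⟩ hp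
  refine ⟨hp.1, apply_sub_le_of_mem_mintySet hJ hh h0 hhlim hA hmono hp, fun ρ hρ => ?_⟩
  have hM := hp.2 u ρ hρ
  simp only [sub_self, map_zero, h0, clarkeDeriv_zero] at hM
  rw [map_sub]
  linarith

theorem convex_mintySet (hΛ : Convex ℝ Λ) (hJ : LocallyLipschitz J) (hh : ConvexOn ℝ Set.univ h) :
    Convex ℝ (mintySet Λ b A γ J f h) := by
  rintro ⟨u₁, l₁⟩ ⟨hl₁, hM₁⟩ ⟨u₂, l₂⟩ ⟨hl₂, hM₂⟩ a c ha hc hac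
  refine ⟨hΛ hl₁ hl₂ ha hc hac, fun v ρ hρ => ?_⟩
  have hv : v - (a • u₁ + c • u₂) = a • (v - u₁) + c • (v - u₂) := by
    conv_lhs => rw [← Convex.combo_self hac v]
    module
  have hγ : γ (a • u₁ + c • u₂) - γ v = a • (γ u₁ - γ v) + c • (γ u₂ - γ v) := by
    conv_lhs => rw [← Convex.combo_self hac (γ v)]
    simp only [map_add, map_smul]
    module
  have hhv := hh.2 (Set.mem_univ (v - u₁)) (Set.mem_univ (v - u₂)) ha hc hac
  have hJv := (hJ.convexOn_clarkeDeriv (γ v)).2 (Set.mem_univ (γ u₁ - γ v))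
    (Set.mem_univ (γ u₂ - γ v)) ha hc hac
  have hM₁' := mul_le_mul_of_nonneg_left (hM₁ v ρ hρ) ha
  have hM₂' := mul_le_mul_of_nonneg_left (hM₂ v ρ hρ) hc
  simp only [Prod.smul_mk, Prod.mk_add_mk]
  rw [hv, hγ]
  simp only [map_add, map_smul, LinearMap.add_apply, LinearMap.smul_apply, smul_eq_mul]
    at hhv hJv hM₁' hM₂' ⊢
  linarith

end MixedInequality

theorem solution_set_convex_general
    {V E X : Type*} [NormedAddCommGroup V] [NormedSpace ℝ V]
    [NormedAddCommGroup E] [NormedSpace ℝ E]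
    [NormedAddCommGroup X] [NormedSpace ℝ X]
    (Λ : Set E) (hΛconv : Convex ℝ Λ)
    (b : V →ₗ[ℝ] E →ₗ[ℝ] ℝ)
    (A : V → (V →L[ℝ] ℝ)) (γ : V →L[ℝ] X) (J : X → ℝ) (hJ : LocallyLipschitz J)
    (f : V →L[ℝ] ℝ) (h : V → ℝ) (hhconv : ConvexOn ℝ Set.univ h)
    (hh0 : h 0 = 0)
    (hhlim : ∀ v : V, 0 ≤ Filter.limsup (fun t : ℝ => h (t • v) / t) (𝓝[>] (0 : ℝ)))
    (hA : ∀ w v : V,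
      Filter.limsup (fun t : ℝ => A (t • w + (1 - t) • v) (w - v)) (𝓝[>] (0 : ℝ))
        ≤ A v (w - v))
    (hmono : ∀ u v : V, ∀ ξu ∈ clarkeGrad J (γ u), ∀ ξv ∈ clarkeGrad J (γ v),
      h (u - v) ≤ A u (u - v) + ξu (γ (u - v)) - A v (u - v) - ξv (γ (u - v))) :
    Convex ℝ {p : V × E | p.2 ∈ Λ ∧
      (∀ v : V, f (v - p.1) ≤
        A p.1 (v - p.1) + b (v - p.1) p.2 + clarkeDeriv J (γ p.1) (γ v - γ p.1)) ∧
      (∀ ρ ∈ Λ, b p.1 (ρ - p.2) ≤ 0)} := by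
  have hsol : solutionSet Λ b A γ J f = mintySet Λ b A γ J f h :=
    (solutionSet_subset_mintySet hJ hmono).antisymm
      (mintySet_subset_solutionSet hJ hhconv hh0 hhlim hA hmono)
  change Convex ℝ (solutionSet Λ b A γ J f)
  rw [hsol]
  exact convex_mintySet hΛconv hJ hhconv

/-- Theorem 3.3(ii): convexity of the solution set of the mixed
variational-hemivariational inequality when `h` is convex. -/
theorem solution_set_convex
    {V E X : Type*} [NormedAddCommGroup V] [NormedSpace ℝ V] [CompleteSpace V]
    [NormedAddCommGroup E] [NormedSpace ℝ E] [CompleteSpace E]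
    [NormedAddCommGroup X] [NormedSpace ℝ X]
    (hreflV : Function.Surjective (NormedSpace.inclusionInDoubleDual ℝ V))
    (hreflE : Function.Surjective (NormedSpace.inclusionInDoubleDual ℝ E))
    (Λ : Set E) (hΛc : IsClosed Λ) (hΛconv : Convex ℝ Λ)
    (b : V →ₗ[ℝ] E →ₗ[ℝ] ℝ) (hb : ∃ M : ℝ, ∀ (v : V) (ρ : E), |b v ρ| ≤ M * ‖v‖ * ‖ρ‖)
    (A : V → (V →L[ℝ] ℝ)) (γ : V →L[ℝ] X) (J : X → ℝ) (hJ : LocallyLipschitz J)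
    (f : V →L[ℝ] ℝ) (h : V → ℝ) (hhconv : ConvexOn ℝ Set.univ h)
    (hh0 : h 0 = 0)
    (hhlim : ∀ v : V, 0 ≤ Filter.limsup (fun t : ℝ => h (t • v) / t) (𝓝[>] (0 : ℝ)))
    (hA : ∀ w v : V,
      Filter.limsup (fun t : ℝ => A (t • w + (1 - t) • v) (w - v)) (𝓝[>] (0 : ℝ))
        ≤ A v (w - v))
    (hmono : ∀ u v : V, ∀ ξu ∈ clarkeGrad J (γ u), ∀ ξv ∈ clarkeGrad J (γ v),
      h (u - v) ≤ A u (u - v) + ξu (γ (u - v)) - A v (u - v) - ξv (γ (u - v))) :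
    Convex ℝ {p : V × E | p.2 ∈ Λ ∧
      (∀ v : V, f (v - p.1) ≤
        A p.1 (v - p.1) + b (v - p.1) p.2 + clarkeDeriv J (γ p.1) (γ v - γ p.1)) ∧
      (∀ ρ ∈ Λ, b p.1 (ρ - p.2) ≤ 0)} :=
  solution_set_convex_general Λ hΛconv b A γ J hJ f h hhconv hh0 hhlim hA hmono
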